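/- Let G be a finite simple graph, T a spanning tree of G, and G̃ the lift of G with respect to T. Let W be a walk in G from u to v, f : S → ZMod 2, and let W̃ be the lifted walk in G̃ starting at (u,f). Then W̃ ends at the vertex (v,g), where for each e ∈ S, g(e) = f(e) + (multiplicity of e in W) computed in ZMod 2. In particular, the endpoint of the lifted walk depends only on the parities of the multiplicities of edges of S in W. -/

import Mathlib

open SimpleGraph

noncomputable section
attribute [local instance] Classical.propDecidable

variable {V : Type*}

/-- The set `S` of edges of `G` not in the spanning tree `T`. -/
def nonTreeEdges (G T : SimpleGraph V) : Set (Sym2 V) := G.edgeSet \ T.edgeSet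

/-- The lift `G̃` of `G` with respect to the spanning tree `T`: its vertices are the pairs
`(u, f)` with `u ∈ V(G)` and `f : S → ZMod 2`; `(u,f)` is adjacent to `(v,g)` iff
`uv ∈ E(G)` and `g` agrees with `f` except that `g(uv) = f(uv) + 1` when `uv ∈ S`
(so `g = f` when `uv ∈ E(T)`). -/
def liftGraph (G T : SimpleGraph V) :
    SimpleGraph (V × (nonTreeEdges G T → ZMod 2)) where
  Adj p q := G.Adj p.1 q.1 ∧
    q.2 = fun e => p.2 e + (if (e : Sym2 V) = s(p.1, q.1) then 1 else 0)
  symm := by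
    constructor
    rintro p q ⟨hadj, hf⟩
    refine ⟨hadj.symm, ?_⟩
    have key : ∀ a c : ZMod 2, a + c + c = a := by decide
    funext e
    have hs : s(q.1, p.1) = s(p.1, q.1) := Sym2.eq_swap
    rw [hs, hf]
    exact (key _ _).symm
  loopless := ⟨fun p h => G.loopless.irrefl p.1 h.1⟩

/-- The projection `π : G̃ → G` on vertices, as a graph homomorphism. -/
def liftProj (G T : SimpleGraph V) : liftGraph G T →g G :=
  ⟨Prod.fst, fun h => h.1⟩

/-- The projection `π` on edges of the lift. -/
def edgeProj (G T : SimpleGraph V) :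
    Sym2 (V × (nonTreeEdges G T → ZMod 2)) → Sym2 V :=
  Sym2.map Prod.fst

theorem liftGraph_walk_aux (G T : SimpleGraph V) : ∀ {u v : V} (W : G.Walk u v)
    (f : nonTreeEdges G T → ZMod 2)
    (z : V × (nonTreeEdges G T → ZMod 2)) (W' : (liftGraph G T).Walk (u, f) z),
    W'.edges.map (edgeProj G T) = W.edges →
    z = (v, fun e => f e + ((W.edges.count (e : Sym2 V) : ℕ) : ZMod 2)) := by
  intro u v W
  induction W with
  | nil =>
    intro f z W' hproj
    cases W' with
    | nil => simp
    | cons h p => simp [Walk.edges_cons] at hproj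
  | cons h W₂ ih =>
    rename_i u w v
    intro f z W' hproj
    cases W' with
    | nil => simp at hproj
    | cons h' p =>
      rename_i q
      simp only [Walk.edges_cons, List.map_cons, List.cons_eq_cons] at hproj
      obtain ⟨he, hrest⟩ := hproj
      have hq1 : q.1 = w := by
        have : s(u, q.1) = s(u, w) := he
        rcases Sym2.eq_iff.mp this with ⟨_, h2⟩ | ⟨h1, h2⟩
        · exact h2
        · exact absurd h1 h.ne
      have hq2 : q.2 = fun e => f e + (if (e : Sym2 V) = s(u, w) then 1 else 0) := by
        rw [h'.2]; simp [hq1]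
      have hq : q = (w, fun e => f e + (if (e : Sym2 V) = s(u, w) then 1 else 0)) :=
        Prod.ext hq1 hq2
      subst hq
      have := ih _ _ p hrest
      rw [this]
      ext e
      · rfl
      · simp only [List.count_cons]
        push_cast
        by_cases hc : (e : Sym2 V) = s(u, w)
        · simp [hc]; ring
        · simp [hc]; rw [List.count_cons_of_ne (Ne.symm hc)]

/-- Let `G` be a finite simple graph, `T` a spanning tree of `G`, and `G̃` the lift of `G`
with respect to `T`. Let `W` be a walk in `G` from `u` to `v`, `f : S → ZMod 2`, and let
`W̃` be the lifted walk in `G̃` starting at `(u,f)` (i.e. a walk whose edges project under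
`π`, in order, to the edges of `W`). Then `W̃` ends at the vertex `(v, g)` where, for each
`e ∈ S`, `g e = f e + (multiplicity of e in W)` computed in `ZMod 2`. -/
theorem liftGraph_lifted_walk_endpoint {V : Type*} [Fintype V] (G T : SimpleGraph V)
    (hT : T.IsTree) (hTG : T ≤ G) {u v : V} (W : G.Walk u v)
    (f : nonTreeEdges G T → ZMod 2)
    (z : V × (nonTreeEdges G T → ZMod 2)) (W' : (liftGraph G T).Walk (u, f) z)
    (hproj : W'.edges.map (edgeProj G T) = W.edges) :
    z = (v, fun e => f e + ((W.edges.count (e : Sym2 V) : ℕ) : ZMod 2)) :=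
  liftGraph_walk_aux G T W f z W' hproj

end
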